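/- Let M = [[A, B],[B^T, C]] be a symmetric (k+n)×(k+n) matrix where A has nonpositive off-diagonal entries, B is entrywise nonpositive with each row nondecreasing, and C ∈ ℳ_n (off-diagonal entries nondecreasing in rows and columns). If M is copositive, then M is SPN. -/

import Mathlib

open Matrix

def Copositive {ι : Type*} [Fintype ι] (A : Matrix ι ι ℝ) : Prop :=
  ∀ x : ι → ℝ, (∀ i, 0 ≤ x i) → 0 ≤ x ⬝ᵥ A.mulVec x

def SPN {ι : Type*} [Fintype ι] (A : Matrix ι ι ℝ) : Prop :=
  ∃ P N : Matrix ι ι ℝ, P.PosSemidef ∧ (∀ i j, 0 ≤ N i j) ∧ A = P + N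

def Mn {n : ℕ} (A : Matrix (Fin n) (Fin n) ℝ) : Prop :=
  ∀ i j k l : Fin n, i ≤ k → j ≤ l → i ≠ j → k ≠ l → A i j ≤ A k l

/-!
Induction on the size, removing one index `j` at a time. If row `j` of the symmetric copositive
matrix `M` is nonnegative, `M` is a nonnegative matrix plus `M` with row and column `j` cleared.
If row `j` is nonpositive off the diagonal and `γ = M j j > 0`, then `M - γ⁻¹ r rᵀ` (`r` the row
`j`) is still copositive and vanishes on row and column `j`, while `γ⁻¹ r rᵀ` is positive
semidefinite; if `γ = 0`, copositivity forces row `j` to be nonnegative. Either way it remains to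
decompose a principal submatrix of size one less, and the sign and monotonicity pattern survives
subtracting `c w wᵀ` with `c ≥ 0` and `w ≤ 0` nondecreasing along the `C` block.

While `k > 0` the first row of `[A B]` is removed. Once `M = C ∈ ℳ_n`, either `C 0 l > 0` for some
`l ≠ 0`, and then monotonicity makes the last column of `C` positive off the diagonal, or row `0`
of `C` is nonpositive off the diagonal.
-/

variable {ι ι' R : Type*} [Fintype ι]

lemma Matrix.mul_apply_nonneg [Semiring R] [PartialOrder R] [IsOrderedRing R] {κ : Type*}
    {A : Matrix ι' ι R} {B : Matrix ι κ R} (hA : ∀ i j, 0 ≤ A i j) (hB : ∀ i j, 0 ≤ B i j)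
    (i : ι') (j : κ) : 0 ≤ (A * B) i j :=
  Finset.sum_nonneg fun l _ => mul_nonneg (hA i l) (hB l j)

lemma Matrix.one_submatrix_nonneg {κ ν : Type*} [DecidableEq κ] [Semiring R] [PartialOrder R]
    [IsOrderedRing R] (f : ν → κ) (g : ι' → κ) (i : ν) (j : ι') :
    0 ≤ (1 : Matrix κ κ R).submatrix f g i j := by
  simp only [submatrix_apply, one_apply]
  split_ifs <;> norm_num

lemma Matrix.submatrix_eq_transpose_mul_mul [DecidableEq ι] [NonAssocSemiring R]
    (M : Matrix ι ι R) (g : ι' → ι) :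
    M.submatrix g g
      = ((1 : Matrix ι ι R).submatrix id g)ᵀ * M * (1 : Matrix ι ι R).submatrix id g := by
  ext p r
  simp [mul_apply, one_apply]

lemma Matrix.IsSymm.dotProduct_mulVec_add_single [DecidableEq ι] [CommSemiring R]
    {M : Matrix ι ι R} (hM : M.IsSymm) (x : ι → R) (j : ι) (c : R) :
    (x + Pi.single j c) ⬝ᵥ M *ᵥ (x + Pi.single j c)
      = x ⬝ᵥ M *ᵥ x + 2 * c * (M *ᵥ x) j + c ^ 2 * M j j := by
  have hcross : x ⬝ᵥ M *ᵥ Pi.single j c = c * (M *ᵥ x) j := by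
    rw [dotProduct_mulVec, ← mulVec_transpose, hM.eq, dotProduct_single, mul_comm]
  rw [mulVec_add, add_dotProduct, dotProduct_add, dotProduct_add, hcross, single_dotProduct,
    single_dotProduct, mulVec_single]
  simp only [Pi.smul_apply, col_apply, MulOpposite.smul_eq_mul_unop, MulOpposite.unop_op]
  ring

lemma Matrix.dotProduct_vecMulVec_mulVec [CommSemiring R] (v x : ι → R) :
    x ⬝ᵥ vecMulVec v v *ᵥ x = (v ⬝ᵥ x) ^ 2 := by
  simp [vecMulVec_mulVec, dotProduct_comm x v, sq]

namespace Copositive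

variable {M : Matrix ι ι ℝ}

lemma transpose_mul_mul [Fintype ι'] (hM : Copositive M) {Q : Matrix ι ι' ℝ}
    (hQ : ∀ i j, 0 ≤ Q i j) : Copositive (Qᵀ * M * Q) := by
  intro x hx
  rw [← mulVec_mulVec, ← mulVec_mulVec, dotProduct_mulVec, vecMul_transpose]
  exact hM _ fun i => Finset.sum_nonneg fun j _ => mul_nonneg (hQ i j) (hx j)

variable [DecidableEq ι]

lemma submatrix [Fintype ι'] (hM : Copositive M) (g : ι' → ι) :
    Copositive (M.submatrix g g) := by
  rw [submatrix_eq_transpose_mul_mul]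
  exact hM.transpose_mul_mul (one_submatrix_nonneg id g)

lemma diag_nonneg (hM : Copositive M) (j : ι) : 0 ≤ M j j := by
  simpa [single_dotProduct, mulVec_single] using
    hM (Pi.single j 1) (Pi.single_nonneg.2 zero_le_one : (0 : ι → ℝ) ≤ _)

lemma row_nonneg_of_diag_eq_zero (hM : Copositive M) (hsymm : M.IsSymm) {j : ι}
    (hjj : M j j = 0) (i : ι) : 0 ≤ M j i := by
  -- Since `M j j = 0`, the form along `e_i + t e_j` is affine in `t`: its slope must be `≥ 0`.
  have key : ∀ t : ℝ, 0 ≤ t → 0 ≤ M i i + 2 * t * M j i := fun t ht => by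
    have := hM (Pi.single i 1 + Pi.single j t)
      (add_nonneg (Pi.single_nonneg.2 zero_le_one) (Pi.single_nonneg.2 ht) : (0 : ι → ℝ) ≤ _)
    simpa [hsymm.dotProduct_mulVec_add_single, single_dotProduct, mulVec_single, hjj] using this
  by_contra! hneg
  have ht : 2 * ((M i i + 1) / (-(2 * M j i))) * M j i = -(M i i + 1) := by
    field_simp [hneg.ne]
  linarith [key ((M i i + 1) / (-(2 * M j i)))
    (div_nonneg (by linarith [hM.diag_nonneg i]) (by linarith))]

lemma sub_inv_smul_vecMulVec (hM : Copositive M) (hsymm : M.IsSymm) {j : ι} (hjj : 0 < M j j)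
    (hrow : ∀ i, i ≠ j → M j i ≤ 0) :
    Copositive (M - (M j j)⁻¹ • vecMulVec (M j) (M j)) := by
  -- Moving `x` to `x - (s / M j j) e_j`, `s = (M x) j`, keeps it nonnegative because row `j` is
  -- nonpositive off the diagonal, and turns its `M`-form into the form in the conclusion.
  intro x hx
  set s := (M *ᵥ x) j
  have hs : s ≤ M j j * x j := by
    rw [show s = ∑ i, M j i * x i from rfl, ← Finset.sum_erase_add _ _ (Finset.mem_univ j)]
    exact add_le_of_nonpos_left <| Finset.sum_nonpos fun i hi =>
      mul_nonpos_of_nonpos_of_nonneg (hrow i (Finset.ne_of_mem_erase hi)) (hx i)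
  have hy : ∀ i, 0 ≤ (x + Pi.single j (-s / M j j) : ι → ℝ) i := by
    intro i
    rcases eq_or_ne i j with rfl | hi
    · simp only [Pi.add_apply, Pi.single_eq_same, neg_div]
      linarith [(div_le_iff₀ hjj).2 (by linarith : s ≤ x i * M i i)]
    · simpa [hi] using hx i
  have := hM _ hy
  rw [hsymm.dotProduct_mulVec_add_single] at this
  rw [sub_mulVec, dotProduct_sub, smul_mulVec, dotProduct_smul, dotProduct_vecMulVec_mulVec]
  have hsq : 2 * (-s / M j j) * s + (-s / M j j) ^ 2 * M j j = -((M j j)⁻¹ * s ^ 2) := by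
    field_simp
    ring
  rw [show M j ⬝ᵥ x = s from rfl, smul_eq_mul]
  linarith

end Copositive

namespace SPN

lemma of_isEmpty [IsEmpty ι] (M : Matrix ι ι ℝ) : SPN M :=
  ⟨0, M, .zero, isEmptyElim, (zero_add M).symm⟩

variable {M : Matrix ι ι ℝ}

lemma add_posSemidef {P : Matrix ι ι ℝ} (hM : SPN M) (hP : P.PosSemidef) : SPN (M + P) := by
  obtain ⟨P', N, hP', hN, rfl⟩ := hM
  exact ⟨P' + P, N, hP'.add hP, hN, by abel⟩

lemma add_nonneg {N : Matrix ι ι ℝ} (hM : SPN M) (hN : ∀ i j, 0 ≤ N i j) : SPN (M + N) := by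
  obtain ⟨P, N', hP, hN', rfl⟩ := hM
  exact ⟨P, N' + N, hP, fun i j => _root_.add_nonneg (hN' i j) (hN i j), by abel⟩

variable [Fintype ι']

lemma transpose_mul_mul (hM : SPN M) {Q : Matrix ι ι' ℝ} (hQ : ∀ i j, 0 ≤ Q i j) :
    SPN (Qᵀ * M * Q) := by
  obtain ⟨P, N, hP, hN, rfl⟩ := hM
  refine ⟨Qᵀ * P * Q, Qᵀ * N * Q, ?_,
    mul_apply_nonneg (mul_apply_nonneg (fun i j => hQ j i) hN) hQ,
    by rw [Matrix.mul_add, Matrix.add_mul]⟩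
  simpa [conjTranspose_eq_transpose_of_trivial] using hP.conjTranspose_mul_mul_same Q

variable [DecidableEq ι]

lemma submatrix (hM : SPN M) (g : ι' → ι) : SPN (M.submatrix g g) := by
  rw [submatrix_eq_transpose_mul_mul]
  exact hM.transpose_mul_mul (one_submatrix_nonneg id g)

lemma of_submatrix {g : ι' → ι} (hg : g.Injective)
    (hM : ∀ i j, i ∉ Set.range g ∨ j ∉ Set.range g → M i j = 0) (h : SPN (M.submatrix g g)) :
    SPN M := by
  convert h.transpose_mul_mul (one_submatrix_nonneg g id)
  ext i j
  by_cases hij : i ∈ Set.range g ∧ j ∈ Set.range g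
  · obtain ⟨⟨p, rfl⟩, ⟨r, rfl⟩⟩ := hij
    classical
    simp [mul_apply, one_apply, hg.eq_iff]
  · rw [hM i j (by tauto)]
    simp only [mul_apply, transpose_apply, submatrix_apply, one_apply, id, ite_mul, one_mul,
      zero_mul, mul_ite, mul_one, mul_zero]
    exact (Finset.sum_eq_zero fun r _ => ite_eq_right_iff.2 fun hr => Finset.sum_eq_zero
      fun p _ => ite_eq_right_iff.2 fun hp => absurd ⟨⟨p, hp⟩, r, hr⟩ hij).symm

variable {g : ι' → ι} {j : ι}

lemma of_row_nonneg (hsymm : M.IsSymm) (hg : g.Injective) (hrange : Set.range g = {j}ᶜ)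
    (hrow : ∀ i, 0 ≤ M j i) (hS : SPN (M.submatrix g g)) : SPN M := by
  have hgj : ∀ p, g p ≠ j := fun p => by simpa [hrange] using Set.mem_range_self (f := g) p
  set M' : Matrix ι ι ℝ := of fun a b => if a = j ∨ b = j then 0 else M a b
  have hM' : SPN M' := by
    refine of_submatrix hg (fun a b hab => ?_) ?_
    · simp only [hrange, Set.mem_compl_singleton_iff, not_not] at hab
      simp [M', hab]
    · convert hS using 1
      ext p r
      simp [M', hgj]
  convert hM'.add_nonneg (N := M - M') (fun a b => ?_) using 1
  · abel
  · by_cases ha : a = j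
    · simp [M', ha, hrow]
    by_cases hb : b = j
    · simpa [M', hb, ha, hsymm.apply a j] using hrow a
    · simp [M', ha, hb]

lemma of_row_nonpos (hsymm : M.IsSymm) (hcop : Copositive M) (hg : g.Injective)
    (hrange : Set.range g = {j}ᶜ) (hrow : ∀ i, i ≠ j → M j i ≤ 0)
    (hS : ∀ c : ℝ, 0 ≤ c →
      Copositive (M.submatrix g g - c • vecMulVec (M j ∘ g) (M j ∘ g)) →
      SPN (M.submatrix g g - c • vecMulVec (M j ∘ g) (M j ∘ g))) :
    SPN M := by
  rcases (hcop.diag_nonneg j).eq_or_lt with hjj | hjj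
  · refine of_row_nonneg hsymm hg hrange (hcop.row_nonneg_of_diag_eq_zero hsymm hjj.symm) ?_
    simpa using hS 0 le_rfl (by simpa using hcop.submatrix g)
  set H := M - (M j j)⁻¹ • vecMulVec (M j) (M j)
  have hHS : H.submatrix g g
      = M.submatrix g g - (M j j)⁻¹ • vecMulVec (M j ∘ g) (M j ∘ g) := by
    ext; simp [H, vecMulVec_apply]
  have hH : SPN H := by
    refine of_submatrix hg (fun a b hab => ?_) ?_
    · simp only [hrange, Set.mem_compl_singleton_iff, not_not] at hab
      rcases hab with rfl | rfl
      · simp [H, vecMulVec_apply, hjj.ne']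
      · simp [H, vecMulVec_apply, hsymm.apply a b, mul_comm, hjj.ne']
    rw [hHS]
    exact hS _ (inv_nonneg.2 hjj.le)
      (hHS ▸ (hcop.sub_inv_smul_vecMulVec hsymm hjj hrow).submatrix g)
  have hpsd : ((M j j)⁻¹ • vecMulVec (M j) (M j)).PosSemidef :=
    (posSemidef_vecMulVec_self_star (M j)).smul (inv_nonneg.2 hjj.le)
  simpa [H] using hH.add_posSemidef hpsd

end SPN

namespace Mn

variable {m n : ℕ} {C : Matrix (Fin n) (Fin n) ℝ}

lemma submatrix (hC : Mn C) {h : Fin m → Fin n} (hh : StrictMono h) : Mn (C.submatrix h h) :=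
  fun _ _ _ _ hik hjl hij hkl => hC _ _ _ _ (hh.monotone hik) (hh.monotone hjl)
    (hh.injective.ne hij) (hh.injective.ne hkl)

lemma sub_smul_vecMulVec (hC : Mn C) {w : Fin n → ℝ} (hw : ∀ i, w i ≤ 0) (hmono : Monotone w)
    {c : ℝ} (hc : 0 ≤ c) : Mn (C - c • vecMulVec w w) := by
  intro i j k l hik hjl hij hkl
  have hprod : w k * w l ≤ w i * w j :=
    mul_le_mul_of_nonpos_of_nonpos (hmono hik) (hmono hjl) (hw i) (hw l)
  simp only [Matrix.sub_apply, Matrix.smul_apply, vecMulVec_apply, smul_eq_mul]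
  linarith [hC i j k l hik hjl hij hkl, mul_le_mul_of_nonneg_left hprod hc]

theorem spn_of_copositive (hsymm : C.IsSymm) (hC : Mn C) (hcop : Copositive C) : SPN C := by
  induction n with
  | zero => exact SPN.of_isEmpty C
  | succ n ih =>
    by_cases hpos : ∃ l, l ≠ 0 ∧ 0 < C 0 l
    · obtain ⟨l, hl, hpos⟩ := hpos
      refine SPN.of_row_nonneg hsymm (Fin.castSucc_injective n)
        (Set.ext fun _ => Fin.exists_castSucc_eq) (fun i => ?_)
        (ih (hsymm.submatrix _) (hC.submatrix Fin.strictMono_castSucc) (hcop.submatrix _))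
      rcases eq_or_ne i (Fin.last n) with rfl | hi
      · exact hcop.diag_nonneg _
      · rw [hsymm.apply]
        exact hpos.le.trans (hC 0 l i (Fin.last n) (Fin.zero_le i) (Fin.le_last l) hl.symm hi)
    · push Not at hpos
      refine SPN.of_row_nonpos hsymm hcop (Fin.succ_injective n) (Fin.range_succ n) hpos
        fun c hc hcop' => ih ?_ ?_ hcop'
      · exact (hsymm.submatrix _).sub (IsSymm.smul (transpose_vecMulVec _ _) c)
      · refine (hC.submatrix Fin.strictMono_succ).sub_smul_vecMulVec
          (fun p => hpos _ (Fin.succ_ne_zero p)) (fun a b hab => ?_) hc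
        exact hC 0 _ 0 _ le_rfl (Fin.succ_le_succ_iff.2 hab) (Fin.succ_ne_zero a).symm
          (Fin.succ_ne_zero b).symm

end Mn

open Sum in
structure IsBlockMn {k n : ℕ} (M : Matrix (Fin k ⊕ Fin n) (Fin k ⊕ Fin n) ℝ) : Prop where
  isSymm : M.IsSymm
  inl_inl_nonpos : ∀ i i', i ≠ i' → M (inl i) (inl i') ≤ 0
  inl_inr_nonpos : ∀ i j, M (inl i) (inr j) ≤ 0
  inl_inr_monotone : ∀ i, Monotone fun j => M (inl i) (inr j)
  mn : Mn M.toBlocks₂₂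

namespace IsBlockMn

open Sum

variable {k n : ℕ} {M : Matrix (Fin k ⊕ Fin n) (Fin k ⊕ Fin n) ℝ}

lemma submatrix_sumMap (hM : IsBlockMn M) {k' n' : ℕ} {f : Fin k' → Fin k} (hf : f.Injective)
    {h : Fin n' → Fin n} (hh : StrictMono h) :
    IsBlockMn (M.submatrix (Sum.map f h) (Sum.map f h)) where
  isSymm := hM.isSymm.submatrix _
  inl_inl_nonpos _ _ hii' := hM.inl_inl_nonpos _ _ (hf.ne hii')
  inl_inr_nonpos _ _ := hM.inl_inr_nonpos _ _
  inl_inr_monotone i := (hM.inl_inr_monotone (f i)).comp hh.monotone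
  mn := hM.mn.submatrix hh

lemma sub_smul_vecMulVec (hM : IsBlockMn M) {w : Fin k ⊕ Fin n → ℝ} (hw : ∀ p, w p ≤ 0)
    (hmono : Monotone (w ∘ inr)) {c : ℝ} (hc : 0 ≤ c) : IsBlockMn (M - c • vecMulVec w w) where
  isSymm := hM.isSymm.sub (IsSymm.smul (transpose_vecMulVec w w) c)
  inl_inl_nonpos i i' hii' := by
    simp only [Matrix.sub_apply, Matrix.smul_apply, vecMulVec_apply, smul_eq_mul]
    linarith [hM.inl_inl_nonpos i i' hii',
      mul_nonneg hc (mul_nonneg_of_nonpos_of_nonpos (hw (inl i)) (hw (inl i')))]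
  inl_inr_nonpos i j := by
    simp only [Matrix.sub_apply, Matrix.smul_apply, vecMulVec_apply, smul_eq_mul]
    linarith [hM.inl_inr_nonpos i j,
      mul_nonneg hc (mul_nonneg_of_nonpos_of_nonpos (hw (inl i)) (hw (inr j)))]
  inl_inr_monotone i j l hjl := by
    simp only [Matrix.sub_apply, Matrix.smul_apply, vecMulVec_apply, smul_eq_mul]
    have hM_le : M (inl i) (inr j) ≤ M (inl i) (inr l) := hM.inl_inr_monotone i hjl
    have hw_le : w (inr j) ≤ w (inr l) := hmono hjl
    linarith [mul_le_mul_of_nonneg_left (mul_le_mul_of_nonpos_left hw_le (hw (inl i))) hc]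
  mn := hM.mn.sub_smul_vecMulVec (fun j => hw (inr j)) hmono hc

theorem spn_of_copositive (hM : IsBlockMn M) (hcop : Copositive M) : SPN M := by
  induction k with
  | zero =>
    have hC : SPN M.toBlocks₂₂ :=
      Mn.spn_of_copositive (hM.isSymm.submatrix inr) hM.mn (hcop.submatrix inr)
    convert hC.submatrix (Sum.elim Fin.elim0 id)
    ext (i | i) (j | j) <;> first | exact i.elim0 | exact j.elim0 | rfl
  | succ k ih =>
    refine SPN.of_row_nonpos (g := Sum.map Fin.succ id) (j := inl 0) hM.isSymm hcop
      ((Fin.succ_injective k).sumMap Function.injective_id) ?_ ?_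
      fun c hc hcop' => ih ?_ hcop'
    · ext (i | j) <;> simp [Fin.exists_succ_eq]
    · rintro (i | j) hi
      · exact hM.inl_inl_nonpos 0 i fun h => hi (congrArg inl h.symm)
      · exact hM.inl_inr_nonpos 0 j
    · refine (hM.submatrix_sumMap (Fin.succ_injective k) strictMono_id).sub_smul_vecMulVec
        (w := M (inl 0) ∘ Sum.map Fin.succ id) ?_ (hM.inl_inr_monotone 0) hc
      rintro (i | j)
      · exact hM.inl_inl_nonpos 0 i.succ (Fin.succ_ne_zero i).symm
      · exact hM.inl_inr_nonpos 0 j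

end IsBlockMn

theorem stmt_13 {k n : ℕ} (A : Matrix (Fin k) (Fin k) ℝ) (B : Matrix (Fin k) (Fin n) ℝ)
    (C : Matrix (Fin n) (Fin n) ℝ) (hA : A.IsSymm) (hC : C.IsSymm)
    (hAoff : ∀ i j : Fin k, i ≠ j → A i j ≤ 0)
    (hBnonpos : ∀ i j, B i j ≤ 0)
    (hBrows : ∀ (i : Fin k) (j l : Fin n), j ≤ l → B i j ≤ B i l)
    (hCMn : Mn C)
    (hcop : Copositive (Matrix.fromBlocks A B Bᵀ C)) :
    SPN (Matrix.fromBlocks A B Bᵀ C) :=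
  IsBlockMn.spn_of_copositive
    ⟨hA.fromBlocks rfl hC, hAoff, hBnonpos, fun i _ _ => hBrows i _ _, hCMn⟩ hcop
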